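/- Let Ω : U → ℝ be a smooth function on an open set U ⊆ ℝ⁴ with coordinates (w, z, w̃, z̃) satisfying the first heavenly equation Ω_{wz̃}·Ω_{zw̃} − Ω_{ww̃}·Ω_{zz̃} = 1 at every point of U. Then for every λ ∈ ℝ, the smooth vector fields L₀ = Ω_{ww̃}∂_{z̃} − Ω_{wz̃}∂_{w̃} − λ∂_w and L₁ = Ω_{zw̃}∂_{z̃} − Ω_{zz̃}∂_{w̃} − λ∂_z on U have vanishing Lie bracket: [L₀, L₁] = 0 at every point of U. -/

import Mathlib

/-!
Write `L₀ = A ∂_z̃ - B ∂_w̃ - λ ∂_w` and `L₁ = C ∂_z̃ - D ∂_w̃ - λ ∂_z` with `A = Ω_ww̃`, `B = Ω_wz̃`,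
`C = Ω_zw̃`, `D = Ω_zz̃`. Since only the coefficients of `∂_z̃` and `∂_w̃` vary,
`[L₀, L₁] = (L₀ C - L₁ A) ∂_z̃ - (L₀ D - L₁ B) ∂_w̃`. Symmetry of third derivatives gives
`C_w = A_z` and `D_w = B_z`, so the `λ`-terms cancel, and `A_z̃ = B_w̃`, `C_z̃ = D_w̃`, which turn the
two coefficients into `-∂_w̃ (BC - AD)` and `-∂_z̃ (BC - AD)`. Both vanish since `BC - AD = 1` on `U`.
-/

noncomputable section

/-- ℝ⁴ with coordinates (w, z, w̃, z̃) indexed by 0, 1, 2, 3. -/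
abbrev R4 : Type := Fin 4 → ℝ

/-- Partial derivative of a function on ℝ⁴ in the i-th coordinate direction. -/
def pd (i : Fin 4) (f : R4 → ℝ) : R4 → ℝ := fun p => fderiv ℝ f p (Pi.single i 1 : R4)

/-- Lie bracket of vector fields on ℝ⁴: [X, Y](p) = DY(p)·X(p) − DX(p)·Y(p). -/
def lieBracket (X Y : R4 → R4) : R4 → R4 := fun p => fderiv ℝ Y p (X p) - fderiv ℝ X p (Y p)

theorem pd_congr_of_eqOn {U : Set R4} (hU : IsOpen U) {f g : R4 → ℝ} (h : Set.EqOn f g U)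
    {p : R4} (hp : p ∈ U) (i : Fin 4) : pd i f p = pd i g p := by
  rw [pd, pd, (h.eventuallyEq_of_mem (hU.mem_nhds hp)).fderiv_eq]

theorem pd_eq_zero_of_eqOn_const {U : Set R4} (hU : IsOpen U) {f : R4 → ℝ} {c : ℝ}
    (h : Set.EqOn f (fun _ => c) U) {p : R4} (hp : p ∈ U) (i : Fin 4) : pd i f p = 0 := by
  rw [pd_congr_of_eqOn hU h hp]
  simp [pd]

theorem pd_mul {f g : R4 → ℝ} {p : R4} (hf : DifferentiableAt ℝ f p)
    (hg : DifferentiableAt ℝ g p) (i : Fin 4) :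
    pd i (f * g) p = f p * pd i g p + g p * pd i f p := by
  rw [pd, fderiv_mul hf hg]
  simp [pd]

theorem pd_sub {f g : R4 → ℝ} {p : R4} (hf : DifferentiableAt ℝ f p)
    (hg : DifferentiableAt ℝ g p) (i : Fin 4) :
    pd i (f - g) p = pd i f p - pd i g p := by
  rw [pd, fderiv_sub hf hg]
  simp [pd]

theorem contDiffOn_pd {U : Set R4} (hU : IsOpen U) {f : R4 → ℝ} {n : WithTop ℕ∞}
    (hf : ContDiffOn ℝ (n + 1) f U) (i : Fin 4) : ContDiffOn ℝ n (pd i f) U :=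
  (hf.fderiv_of_isOpen hU le_rfl).clm_apply contDiffOn_const

theorem differentiableAt_pd {U : Set R4} (hU : IsOpen U) {f : R4 → ℝ}
    (hf : ContDiffOn ℝ 2 f U) {p : R4} (hp : p ∈ U) (i : Fin 4) : DifferentiableAt ℝ (pd i f) p :=
  ((contDiffOn_pd hU hf i).contDiffAt (hU.mem_nhds hp)).differentiableAt one_ne_zero

theorem pd_comm {U : Set R4} (hU : IsOpen U) {f : R4 → ℝ} (hf : ContDiffOn ℝ 2 f U) (i j : Fin 4) :
    Set.EqOn (pd i (pd j f)) (pd j (pd i f)) U := by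
  intro p hp
  have hsmooth : ContDiffAt ℝ 2 f p := hf.contDiffAt (hU.mem_nhds hp)
  have hsymm : IsSymmSndFDerivAt ℝ f p := hsmooth.isSymmSndFDerivAt (by simp)
  have hdiff : DifferentiableAt ℝ (fderiv ℝ f) p :=
    (hsmooth.fderiv_right (m := 1) le_rfl).differentiableAt one_ne_zero
  have hsnd (k l : Fin 4) :
      pd k (pd l f) p = fderiv ℝ (fderiv ℝ f) p (Pi.single k 1) (Pi.single l 1) := by
    change fderiv ℝ (fun q => fderiv ℝ f q (Pi.single l 1)) p (Pi.single k 1) = _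
    simp [fderiv_clm_apply hdiff (differentiableAt_const _)]
  rw [hsnd, hsnd, hsymm]

theorem pd_pd_pd_reverse {U : Set R4} (hU : IsOpen U) {f : R4 → ℝ} (hf : ContDiffOn ℝ 3 f U)
    {p : R4} (hp : p ∈ U) (i j k : Fin 4) : pd i (pd j (pd k f)) p = pd k (pd j (pd i f)) p :=
  calc pd i (pd j (pd k f)) p = pd j (pd i (pd k f)) p := pd_comm hU (contDiffOn_pd hU hf k) i j hp
    _ = pd j (pd k (pd i f)) p := pd_congr_of_eqOn hU (pd_comm hU (hf.of_le (by norm_num)) i k) hp j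
    _ = pd k (pd j (pd i f)) p := pd_comm hU (contDiffOn_pd hU hf i) j k hp

theorem fderiv_apply_smul_single_sub (g : R4 → ℝ) (p : R4) (x y z : ℝ) (i j k : Fin 4) :
    fderiv ℝ g p (x • Pi.single i 1 - y • Pi.single j 1 - z • Pi.single k 1) =
      x * pd i g p - y * pd j g p - z * pd k g p := by
  simp [pd]

theorem lieBracket_smul_sub_smul_sub_const {a b c d : R4 → ℝ} {p : R4}
    (ha : DifferentiableAt ℝ a p) (hb : DifferentiableAt ℝ b p)
    (hc : DifferentiableAt ℝ c p) (hd : DifferentiableAt ℝ d p) (u v w₀ w₁ : R4) :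
    lieBracket (fun q => a q • u - b q • v - w₀) (fun q => c q • u - d q • v - w₁) p =
      (fderiv ℝ c p (a p • u - b p • v - w₀) - fderiv ℝ a p (c p • u - d p • v - w₁)) • u -
      (fderiv ℝ d p (a p • u - b p • v - w₀) - fderiv ℝ b p (c p • u - d p • v - w₁)) • v := by
  have hX : HasFDerivAt (fun q => a q • u - b q • v - w₀)
      ((fderiv ℝ a p).smulRight u - (fderiv ℝ b p).smulRight v) p :=
    ((ha.hasFDerivAt.smul_const u).sub (hb.hasFDerivAt.smul_const v)).sub_const w₀
  have hY : HasFDerivAt (fun q => c q • u - d q • v - w₁)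
      ((fderiv ℝ c p).smulRight u - (fderiv ℝ d p).smulRight v) p :=
    ((hc.hasFDerivAt.smul_const u).sub (hd.hasFDerivAt.smul_const v)).sub_const w₁
  simp only [lieBracket, hX.fderiv, hY.fderiv, FunLike.coe_sub, Pi.sub_apply,
    ContinuousLinearMap.smulRight_apply]
  module

theorem heavenly_lax_commutes (U : Set R4) (hU : IsOpen U) (Ω : R4 → ℝ)
    (hΩ : ContDiffOn ℝ (⊤ : ℕ∞) Ω U)
    (heav : ∀ p ∈ U,
      pd 0 (pd 3 Ω) p * pd 1 (pd 2 Ω) p - pd 0 (pd 2 Ω) p * pd 1 (pd 3 Ω) p = 1)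
    (lam : ℝ) :
    ∀ p ∈ U, lieBracket
      (fun q => pd 0 (pd 2 Ω) q • (Pi.single 3 1 : R4) - pd 0 (pd 3 Ω) q • (Pi.single 2 1 : R4)
                - lam • (Pi.single 0 1 : R4))
      (fun q => pd 1 (pd 2 Ω) q • (Pi.single 3 1 : R4) - pd 1 (pd 3 Ω) q • (Pi.single 2 1 : R4)
                - lam • (Pi.single 1 1 : R4))
      p = 0 := by
  intro p hp
  have hΩ3 : ContDiffOn ℝ 3 Ω U := hΩ.of_le (WithTop.coe_le_coe.2 le_top)
  have hpd₂ : ContDiffOn ℝ 2 (pd 2 Ω) U := contDiffOn_pd hU hΩ3 2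
  have hpd₃ : ContDiffOn ℝ 2 (pd 3 Ω) U := contDiffOn_pd hU hΩ3 3
  have hA := differentiableAt_pd hU hpd₂ hp 0
  have hB := differentiableAt_pd hU hpd₃ hp 0
  have hC := differentiableAt_pd hU hpd₂ hp 1
  have hD := differentiableAt_pd hU hpd₃ hp 1
  have hheav (i : Fin 4) :
      pd i (pd 0 (pd 3 Ω) * pd 1 (pd 2 Ω) - pd 0 (pd 2 Ω) * pd 1 (pd 3 Ω)) p = 0 :=
    pd_eq_zero_of_eqOn_const hU heav hp i
  simp only [pd_sub (hB.mul hC) (hA.mul hD), pd_mul hA hD, pd_mul hB hC] at hheav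
  have hC₀ := pd_comm hU hpd₂ 0 1 hp
  have hD₀ := pd_comm hU hpd₃ 0 1 hp
  have hA₃ := pd_pd_pd_reverse hU hΩ3 hp 3 0 2
  have hC₃ := pd_pd_pd_reverse hU hΩ3 hp 3 1 2
  rw [lieBracket_smul_sub_smul_sub_const hA hB hC hD]
  convert (by simp : (0 : ℝ) • (Pi.single 3 1 : R4) - (0 : ℝ) • Pi.single 2 1 = 0) using 3
  all_goals rw [fderiv_apply_smul_single_sub, fderiv_apply_smul_single_sub]
  · linear_combination -hheav 2 + pd 0 (pd 2 Ω) p * hC₃ - pd 1 (pd 2 Ω) p * hA₃ - lam * hC₀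
  · linear_combination -hheav 3 + pd 0 (pd 3 Ω) p * hC₃ - pd 1 (pd 3 Ω) p * hA₃ - lam * hD₀

end
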